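/- arXiv:1803.02461 — 2 statements merged into one kernel-verified Lean document; each statement's English description precedes it below -/
import Mathlib

section
/- (Subgradient-norm form of the one-step estimate.) Suppose g is μ-sharp on 𝒳 with 𝒳* nonempty. Let x ∈ 𝒳, let ζ ≠ 0 be a weak subgradient of g at x, let α > 0, and set x⁺ = proj_𝒳( x − α·ζ/‖ζ‖ ). Then, writing E(x) = dist²(x, 𝒳*), one has E(x⁺) ≤ (1 + αρ/‖ζ‖)·E(x) − (2αμ/‖ζ‖)·√(E(x)) + α². -/
open scoped InnerProductSpace

/-!
For every minimizer `z`, the projection onto the convex set `X` does not increase the distance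
to `z`, so `‖x⁺ - z‖² ≤ ‖x - (α/‖ζ‖)ζ - z‖²`. Expanding the square and bounding `⟪ζ, x - z⟫`
from below by the weak subgradient inequality at `z` together with sharpness at `x` gives
`‖x⁺ - z‖² ≤ (1 + αρ/‖ζ‖)‖x - z‖² - (2αμ/‖ζ‖) dist(x, X*) + α²`; taking the infimum over `z`
yields the estimate.
-/

section Projection

variable {F : Type*} [NormedAddCommGroup F] [InnerProductSpace ℝ F]

theorem real_inner_sub_le_zero_of_forall_dist_le {K : Set F} (hK : Convex ℝ K) {u v : F}
    (hv : v ∈ K) (hmin : ∀ w ∈ K, dist u v ≤ dist u w) : ∀ w ∈ K, ⟪u - v, w - v⟫_ℝ ≤ 0 := by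
  refine (norm_eq_iInf_iff_real_inner_le_zero hK hv).mp (le_antisymm ?_ ?_)
  · have : Nonempty K := ⟨⟨v, hv⟩⟩
    exact le_ciInf fun w => by simpa only [dist_eq_norm] using hmin w w.2
  · exact ciInf_le ⟨0, Set.forall_mem_range.mpr fun _ => norm_nonneg _⟩ (⟨v, hv⟩ : K)

theorem norm_sub_le_of_forall_dist_le {K : Set F} (hK : Convex ℝ K) {u v : F}
    (hv : v ∈ K) (hmin : ∀ w ∈ K, dist u v ≤ dist u w) {z : F} (hz : z ∈ K) :
    ‖v - z‖ ≤ ‖u - z‖ := by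
  have hinner := real_inner_sub_le_zero_of_forall_dist_le hK hv hmin z hz
  have hexpand : ‖u - z‖ ^ 2 = ‖u - v‖ ^ 2 - 2 * ⟪u - v, z - v⟫_ℝ + ‖z - v‖ ^ 2 := by
    rw [← norm_sub_sq_real, sub_sub_sub_cancel_right]
  have hsq : ‖z - v‖ ^ 2 ≤ ‖u - z‖ ^ 2 := by nlinarith [sq_nonneg ‖u - v‖]
  rw [norm_sub_rev v z]
  exact (pow_le_pow_iff_left₀ (norm_nonneg _) (norm_nonneg _) two_ne_zero).mp hsq

theorem norm_sub_normalized_step_sub_sq {ζ : F} (hζ : ζ ≠ 0) (α : ℝ) (x z : F) :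
    ‖x - (α / ‖ζ‖) • ζ - z‖ ^ 2 = ‖x - z‖ ^ 2 - 2 * (α / ‖ζ‖) * ⟪ζ, x - z⟫_ℝ + α ^ 2 := by
  have hstep : ‖(α / ‖ζ‖) • ζ‖ ^ 2 = α ^ 2 := by
    rw [norm_smul, Real.norm_eq_abs, abs_div, abs_norm, div_mul_cancel₀ _ (norm_ne_zero_iff.mpr hζ),
      sq_abs]
  rw [sub_right_comm, norm_sub_sq_real, hstep, real_inner_smul_right, real_inner_comm]
  ring

end Projection

theorem Metric.le_infDist_sq {α : Type*} [PseudoMetricSpace α] {s : Set α} (hs : s.Nonempty)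
    {x : α} {b : ℝ} (h : ∀ z ∈ s, b ≤ dist x z ^ 2) : b ≤ Metric.infDist x s ^ 2 := by
  have hsqrt : √b ≤ Metric.infDist x s :=
    (Metric.le_infDist hs).mpr fun z hz => (Real.sqrt_le_left dist_nonneg).mpr (h z hz)
  exact (Real.sqrt_le_left Metric.infDist_nonneg).mp hsqrt

theorem one_step_estimate_subgradient_norm_general
    {d : ℕ}
    (g : EuclideanSpace ℝ (Fin d) → ℝ) (μ ρ α : ℝ)
    (hρ : 0 < ρ) (hα : 0 < α)
    (X Xstar : Set (EuclideanSpace ℝ (Fin d)))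
    (hXcv : Convex ℝ X)
    (hXstar : Xstar = {x | x ∈ X ∧ ∀ y ∈ X, g x ≤ g y})
    (hXstarNe : Xstar.Nonempty)
    -- `gstar` is the minimal value of `g` over `X`
    (gstar : ℝ) (hgstar : ∀ z ∈ Xstar, g z = gstar)
    -- sharpness
    (hsharp : ∀ x ∈ X, μ * Metric.infDist x Xstar ≤ g x - gstar)
    (x : EuclideanSpace ℝ (Fin d)) (hxX : x ∈ X)
    -- `ζ ≠ 0` is a weak subgradient of `g` at `x`
    (ζ : EuclideanSpace ℝ (Fin d)) (hζ0 : ζ ≠ 0)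
    (hζ : ∀ y, g x + ⟪ζ, y - x⟫_ℝ - ρ / 2 * ‖y - x‖ ^ 2 ≤ g y)
    -- `xp` is the projection onto `X` of the normalized subgradient step
    (xp : EuclideanSpace ℝ (Fin d)) (hxpX : xp ∈ X)
    (hxp : ∀ y ∈ X, dist (x - (α / ‖ζ‖) • ζ) xp ≤ dist (x - (α / ‖ζ‖) • ζ) y) :
    Metric.infDist xp Xstar ^ 2 ≤
      (1 + α * ρ / ‖ζ‖) * Metric.infDist x Xstar ^ 2
        - 2 * α * μ / ‖ζ‖ * Real.sqrt (Metric.infDist x Xstar ^ 2) + α ^ 2 := by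
  set s := α / ‖ζ‖
  set D := Metric.infDist x Xstar
  have hc : 0 < 1 + s * ρ := by positivity
  have hpoint : ∀ z ∈ Xstar, Metric.infDist xp Xstar ^ 2 ≤
      (1 + s * ρ) * dist x z ^ 2 - 2 * s * μ * D + α ^ 2 := by
    intro z hz
    have hzX : z ∈ X := (hXstar ▸ hz).1
    have hinner : μ * D - ρ / 2 * ‖x - z‖ ^ 2 ≤ ⟪ζ, x - z⟫_ℝ := by
      have hsub := hζ z
      rw [hgstar z hz, ← neg_sub x z, inner_neg_right, norm_neg] at hsub
      linarith [hsharp x hxX]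
    have hproj := norm_sub_le_of_forall_dist_le hXcv hxpX hxp hzX
    calc Metric.infDist xp Xstar ^ 2 ≤ ‖xp - z‖ ^ 2 := by
          rw [← dist_eq_norm]
          exact pow_le_pow_left₀ Metric.infDist_nonneg (Metric.infDist_le_dist_of_mem hz) 2
      _ ≤ ‖x - s • ζ - z‖ ^ 2 := by gcongr
      _ = ‖x - z‖ ^ 2 - 2 * s * ⟪ζ, x - z⟫_ℝ + α ^ 2 := norm_sub_normalized_step_sub_sq hζ0 α x z
      _ ≤ (1 + s * ρ) * dist x z ^ 2 - 2 * s * μ * D + α ^ 2 := by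
          rw [dist_eq_norm]
          nlinarith [div_pos hα (norm_pos_iff.mpr hζ0)]
  have hinf : (Metric.infDist xp Xstar ^ 2 + 2 * s * μ * D - α ^ 2) / (1 + s * ρ) ≤ D ^ 2 :=
    Metric.le_infDist_sq hXstarNe fun z hz => (div_le_iff₀' hc).mpr (by linarith [hpoint z hz])
  have hcoef : α * ρ / ‖ζ‖ = s * ρ ∧ 2 * α * μ / ‖ζ‖ = 2 * s * μ := ⟨by ring, by ring⟩
  rw [Real.sqrt_sq Metric.infDist_nonneg, hcoef.1, hcoef.2]
  linarith [(div_le_iff₀' hc).mp hinf]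

/-- **Subgradient-norm form of the one-step estimate.**
If `g` is `μ`-sharp on `X` with nonempty solution set `Xstar`, `x ∈ X`, `ζ ≠ 0` is a weak
subgradient of `g` at `x`, `α > 0`, and `x⁺ = proj_X(x - α·ζ/‖ζ‖)`, then, writing
`E(x) = dist²(x, Xstar)`, `E(x⁺) ≤ (1 + αρ/‖ζ‖)·E(x) - (2αμ/‖ζ‖)·√(E(x)) + α²`. -/
theorem one_step_estimate_subgradient_norm
    {d : ℕ} (hd : 1 ≤ d)
    (g : EuclideanSpace ℝ (Fin d) → ℝ) (μ ρ α : ℝ)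
    (hμ : 0 < μ) (hρ : 0 < ρ) (hα : 0 < α)
    (X Xstar : Set (EuclideanSpace ℝ (Fin d)))
    (hXne : X.Nonempty) (hXcl : IsClosed X) (hXcv : Convex ℝ X)
    (hXstar : Xstar = {x | x ∈ X ∧ ∀ y ∈ X, g x ≤ g y})
    (hXstarNe : Xstar.Nonempty)
    -- `gstar` is the minimal value of `g` over `X`
    (gstar : ℝ) (hgstar : ∀ z ∈ Xstar, g z = gstar)
    -- sharpness
    (hsharp : ∀ x ∈ X, μ * Metric.infDist x Xstar ≤ g x - gstar)
    (x : EuclideanSpace ℝ (Fin d)) (hxX : x ∈ X)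
    -- `ζ ≠ 0` is a weak subgradient of `g` at `x`
    (ζ : EuclideanSpace ℝ (Fin d)) (hζ0 : ζ ≠ 0)
    (hζ : ∀ y, g x + ⟪ζ, y - x⟫_ℝ - ρ / 2 * ‖y - x‖ ^ 2 ≤ g y)
    -- `xp` is the projection onto `X` of the normalized subgradient step
    (xp : EuclideanSpace ℝ (Fin d)) (hxpX : xp ∈ X)
    (hxp : ∀ y ∈ X, dist (x - (α / ‖ζ‖) • ζ) xp ≤ dist (x - (α / ‖ζ‖) • ζ) y) :
    Metric.infDist xp Xstar ^ 2 ≤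
      (1 + α * ρ / ‖ζ‖) * Metric.infDist x Xstar ^ 2
        - 2 * α * μ / ‖ζ‖ * Real.sqrt (Metric.infDist x Xstar ^ 2) + α ^ 2 :=
  one_step_estimate_subgradient_norm_general g μ ρ α hρ hα X Xstar hXcv hXstar hXstarNe gstar hgstar
    hsharp x hxX ζ hζ0 hζ xp hxpX hxp
end

section
/- (Contraction inequality for the constant-stepsize subgradient method.) Suppose g is μ-sharp on 𝒳 with 𝒳* nonempty, fix L with 0 < μ ≤ L, set τ = μ/L, and fix a stepsize α with 0 < α < τ·μ/ρ (so that μ² − αρL > 0). Define E* = ( αL/(μ + √(μ² − αρL)) )². Let x ∈ 𝒯₁, let ζ ≠ 0 be a weak subgradient of g at x with ‖ζ‖ ≤ L, and set x⁺ = proj_𝒳( x − α·ζ/‖ζ‖ ). Then, writing E(x) = dist²(x, 𝒳*), one has E(x⁺) − E* ≤ q·(E(x) − E*), where q = 1 + (α/L)·(ρ − 2μ/(√(E(x)) + √(E*))) satisfies q < 1. -/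
open scoped InnerProductSpace
open Metric

/-!
Fix a minimizer `x̄`. The projection onto the convex set `𝒳` is nonexpansive towards `x̄`, and
the weak subgradient inequality at `x̄` together with sharpness gives
`⟪ζ, x - x̄⟫ ≥ μ·dist(x, 𝒳*) - (ρ/2)‖x - x̄‖²`. Expanding the square and passing to the infimum
over `x̄` yields, with `s = dist(x, 𝒳*)` and `c = α/‖ζ‖ ≥ α/L`,
`E(x⁺) ≤ (1 + cρ)s² - 2cμs + α² ≤ s² + (α/L)(ρs² - 2μs) + α²`,
the last step because `ρs < μ` in the tube. The threshold `r = √E*` is the smaller root of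
`ρr² - 2μr + αL = 0`, i.e. a fixed point of this bound, and subtracting `r²` factors the bound as
`q·(s² - r²)`. Finally `q < 1` because `ρ(s + r) < 2μ`.
-/

theorem le_comp_infDist_of_forall_mem {α : Type*} [PseudoMetricSpace α] [ProperSpace α]
    {s : Set α} (hs : s.Nonempty) (x : α) {f : ℝ → ℝ} (hf : Continuous f) {a : ℝ}
    (h : ∀ y ∈ s, a ≤ f (dist x y)) : a ≤ f (infDist x s) := by
  obtain ⟨y, hy, hxy⟩ := exists_mem_closure_infDist_eq_dist hs x
  have hclosed : IsClosed {y | a ≤ f (dist x y)} :=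
    isClosed_le continuous_const (hf.comp (continuous_const.dist continuous_id))
  rw [hxy]
  exact closure_minimal h hclosed hy

section InnerProductSpace

variable {F : Type*} [NormedAddCommGroup F] [InnerProductSpace ℝ F]

theorem Convex.dist_le_of_forall_dist_le {K : Set F} (hK : Convex ℝ K) {u p : F} (hp : p ∈ K)
    (hmin : ∀ y ∈ K, dist u p ≤ dist u y) {y : F} (hy : y ∈ K) : dist p y ≤ dist u y := by
  have : Nonempty K := ⟨⟨p, hp⟩⟩
  have hinf : ‖u - p‖ = ⨅ w : K, ‖u - w‖ := by
    refine le_antisymm (le_ciInf fun w => ?_) (ciInf_le ⟨0, ?_⟩ (⟨p, hp⟩ : K))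
    · simpa only [dist_eq_norm] using hmin w w.2
    · rintro _ ⟨w, rfl⟩
      exact norm_nonneg _
  have hobtuse : ⟪u - p, y - p⟫_ℝ ≤ 0 :=
    (norm_eq_iInf_iff_real_inner_le_zero hK hp).mp hinf y hy
  have hexpand : ‖u - y‖ ^ 2 = ‖u - p‖ ^ 2 - 2 * ⟪u - p, y - p⟫_ℝ + ‖y - p‖ ^ 2 := by
    rw [← norm_sub_sq_real, sub_sub_sub_cancel_right]
  rw [dist_eq_norm, dist_eq_norm, norm_sub_rev p y]
  exact pow_le_pow_iff_left₀ (norm_nonneg _) (norm_nonneg _) two_ne_zero |>.mp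
    (by nlinarith [sq_nonneg ‖u - p‖])

def IsWeakSubgradient (ρ : ℝ) (g : F → ℝ) (x ζ : F) : Prop :=
  ∀ y, g x + ⟪ζ, y - x⟫_ℝ - ρ / 2 * ‖y - x‖ ^ 2 ≤ g y

theorem IsWeakSubgradient.sq_dist_sub_smul_le {ρ : ℝ} {g : F → ℝ} {x ζ : F}
    (hζ : IsWeakSubgradient ρ g x ζ) {c : ℝ} (hc : 0 ≤ c) (y : F) :
    dist (x - c • ζ) y ^ 2
      ≤ (1 + c * ρ) * dist x y ^ 2 - 2 * c * (g x - g y) + c ^ 2 * ‖ζ‖ ^ 2 := by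
  have hinner : g x - g y - ρ / 2 * dist x y ^ 2 ≤ ⟪ζ, x - y⟫_ℝ := by
    have := hζ y
    rw [← neg_sub x y, inner_neg_right, norm_neg, ← dist_eq_norm] at this
    linarith
  have hexpand :
      dist (x - c • ζ) y ^ 2 = dist x y ^ 2 - 2 * c * ⟪ζ, x - y⟫_ℝ + c ^ 2 * ‖ζ‖ ^ 2 := by
    rw [dist_eq_norm, dist_eq_norm, sub_right_comm, norm_sub_sq_real, real_inner_smul_right,
      real_inner_comm, norm_smul, Real.norm_of_nonneg hc]
    ring
  rw [hexpand]
  nlinarith [mul_le_mul_of_nonneg_left hinner hc]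

theorem sq_infDist_proj_step_le [ProperSpace F] {K S : Set F} (hK : Convex ℝ K) (hSK : S ⊆ K)
    (hS : S.Nonempty) {ρ μ c : ℝ} {g : F → ℝ} {x ζ p : F} (hζ : IsWeakSubgradient ρ g x ζ)
    (hc : 0 ≤ c) (hsharp : ∀ y ∈ S, μ * infDist x S ≤ g x - g y) (hp : p ∈ K)
    (hmin : ∀ y ∈ K, dist (x - c • ζ) p ≤ dist (x - c • ζ) y) :
    infDist p S ^ 2
      ≤ (1 + c * ρ) * infDist x S ^ 2 - 2 * c * (μ * infDist x S) + c ^ 2 * ‖ζ‖ ^ 2 := by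
  refine le_comp_infDist_of_forall_mem (f := fun t ↦
    (1 + c * ρ) * t ^ 2 - 2 * c * (μ * infDist x S) + c ^ 2 * ‖ζ‖ ^ 2) hS x (by fun_prop)
    fun y hy => ?_
  have hp_near : dist p y ≤ dist (x - c • ζ) y := hK.dist_le_of_forall_dist_le hp hmin (hSK hy)
  calc infDist p S ^ 2 ≤ dist p y ^ 2 := by
        gcongr
        exacts [infDist_nonneg, infDist_le_dist_of_mem hy]
    _ ≤ dist (x - c • ζ) y ^ 2 := by gcongr
    _ ≤ (1 + c * ρ) * dist x y ^ 2 - 2 * c * (g x - g y) + c ^ 2 * ‖ζ‖ ^ 2 :=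
      hζ.sq_dist_sub_smul_le hc y
    _ ≤ (1 + c * ρ) * dist x y ^ 2 - 2 * c * (μ * infDist x S) + c ^ 2 * ‖ζ‖ ^ 2 := by
      gcongr
      exact hsharp y hy

end InnerProductSpace

theorem mul_div_add_sqrt_eq_sub_sqrt {μ ρ α L : ℝ} (hμ : 0 < μ) (h : 0 ≤ μ ^ 2 - α * ρ * L) :
    ρ * (α * L / (μ + √(μ ^ 2 - α * ρ * L))) = μ - √(μ ^ 2 - α * ρ * L) := by
  have hpos : 0 < μ + √(μ ^ 2 - α * ρ * L) := by positivity
  rw [mul_div_assoc', div_eq_iff hpos.ne']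
  linear_combination Real.sq_sqrt h

theorem quadratic_eq_zero_of_eq_div_add_sqrt {μ ρ α L r : ℝ} (hμ : 0 < μ)
    (h : 0 ≤ μ ^ 2 - α * ρ * L) (hr : r = α * L / (μ + √(μ ^ 2 - α * ρ * L))) :
    ρ * r ^ 2 - 2 * μ * r + α * L = 0 := by
  have hρr : ρ * r = μ - √(μ ^ 2 - α * ρ * L) := hr ▸ mul_div_add_sqrt_eq_sub_sqrt hμ h
  have hrD : r * (μ + √(μ ^ 2 - α * ρ * L)) = α * L := by
    rw [hr, div_mul_cancel₀ _ (by positivity)]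
  linear_combination r * hρr - hrD

theorem sq_add_step_sub_sq_eq {ρ μ α L s r : ℝ} (hL : L ≠ 0) (hsr : s + r ≠ 0)
    (hr : ρ * r ^ 2 - 2 * μ * r + α * L = 0) :
    s ^ 2 + α / L * (ρ * s ^ 2 - 2 * μ * s) + α ^ 2 - r ^ 2
      = (1 + α / L * (ρ - 2 * μ / (s + r))) * (s ^ 2 - r ^ 2) := by
  have hdiv : 2 * μ / (s + r) * (s ^ 2 - r ^ 2) = 2 * μ * (s - r) := by
    field_simp
    ring
  have hα : α / L * (α * L) = α ^ 2 := by
    field_simp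
  linear_combination α / L * hr + α / L * hdiv - hα

theorem one_add_mul_sub_div_lt_one {a ρ μ t : ℝ} (ha : 0 < a) (ht : 0 < t) (h : ρ * t < 2 * μ) :
    1 + a * (ρ - 2 * μ / t) < 1 := by
  have hρ : ρ < 2 * μ / t := by rwa [lt_div_iff₀ ht]
  nlinarith

theorem contraction_inequality_general
    {d : ℕ}
    (g : EuclideanSpace ℝ (Fin d) → ℝ) (μ ρ L α : ℝ)
    (hμ : 0 < μ) (hρ : 0 < ρ)
    (hα : 0 < α) (hα' : α < (μ / L) * (μ / ρ))
    (X Xstar : Set (EuclideanSpace ℝ (Fin d)))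
    (hXcv : Convex ℝ X)
    (hXstar : Xstar = {x | x ∈ X ∧ ∀ y ∈ X, g x ≤ g y})
    (hXstarNe : Xstar.Nonempty)
    -- `gstar` is the minimal value of `g` over `X`
    (gstar : ℝ) (hgstar : ∀ z ∈ Xstar, g z = gstar)
    -- sharpness
    (hsharp : ∀ x ∈ X, μ * Metric.infDist x Xstar ≤ g x - gstar)
    -- `x` lies in the tube `𝒯₁`
    (x : EuclideanSpace ℝ (Fin d)) (hxX : x ∈ X)
    (hxtube : Metric.infDist x Xstar < μ / ρ)
    -- `ζ ≠ 0` is a weak subgradient of `g` at `x` with `‖ζ‖ ≤ L`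
    (ζ : EuclideanSpace ℝ (Fin d)) (hζ0 : ζ ≠ 0) (hζL : ‖ζ‖ ≤ L)
    (hζ : ∀ y, g x + ⟪ζ, y - x⟫_ℝ - ρ / 2 * ‖y - x‖ ^ 2 ≤ g y)
    -- `xp` is the projection onto `X` of the normalized subgradient step
    (xp : EuclideanSpace ℝ (Fin d)) (hxpX : xp ∈ X)
    (hxp : ∀ y ∈ X, dist (x - (α / ‖ζ‖) • ζ) xp ≤ dist (x - (α / ‖ζ‖) • ζ) y)
    -- the threshold `E*` and the contraction factor `q`
    (Estar : ℝ) (hEstar : Estar = (α * L / (μ + Real.sqrt (μ ^ 2 - α * ρ * L))) ^ 2)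
    (q : ℝ)
    (hq : q = 1 + (α / L) * (ρ - 2 * μ /
      (Real.sqrt (Metric.infDist x Xstar ^ 2) + Real.sqrt Estar))) :
    q < 1 ∧ Metric.infDist xp Xstar ^ 2 - Estar ≤ q * (Metric.infDist x Xstar ^ 2 - Estar) := by
  have hζpos : 0 < ‖ζ‖ := norm_pos_iff.mpr hζ0
  have hL : 0 < L := hζpos.trans_le hζL
  set s := infDist x Xstar
  have hs : 0 ≤ s := infDist_nonneg
  have hρs : ρ * s < μ := (lt_div_iff₀' hρ).mp hxtube
  have hdisc : 0 < μ ^ 2 - α * ρ * L := by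
    rw [div_mul_div_comm, lt_div_iff₀ (by positivity)] at hα'
    linarith
  set r := α * L / (μ + √(μ ^ 2 - α * ρ * L)) with hr_def
  have hr : 0 < r := by positivity
  have hρr : ρ * r < μ := by
    linarith [mul_div_add_sqrt_eq_sub_sqrt hμ hdisc.le, Real.sqrt_pos.mpr hdisc]
  have hroot := quadratic_eq_zero_of_eq_div_add_sqrt hμ hdisc.le hr_def
  have hsr : 0 < s + r := by positivity
  have hq' : q = 1 + α / L * (ρ - 2 * μ / (s + r)) := by
    rw [hq, hEstar, Real.sqrt_sq hs, Real.sqrt_sq hr.le]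
  refine ⟨?_, ?_⟩
  · rw [hq']
    exact one_add_mul_sub_div_lt_one (div_pos hα hL) hsr (by linarith)
  · set c := α / ‖ζ‖
    have hstep := sq_infDist_proj_step_le (c := c) hXcv (fun y hy => (hXstar ▸ hy).1) hXstarNe
      hζ (by positivity) (fun y hy => (hgstar y hy).symm ▸ hsharp x hxX) hxpX hxp
    have hcζ : c ^ 2 * ‖ζ‖ ^ 2 = α ^ 2 := by rw [div_pow, div_mul_cancel₀ _ (by positivity)]
    have hcL : α / L ≤ c := div_le_div_of_nonneg_left hα.le hζpos hζL
    have hslope : ρ * s ^ 2 - 2 * μ * s ≤ 0 := by nlinarith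
    have hc_to_L := mul_le_mul_of_nonpos_right hcL hslope
    rw [hEstar, hq', ← sq_add_step_sub_sq_eq hL.ne' hsr.ne' hroot]
    linarith

/-- **Contraction inequality for the constant-stepsize subgradient method.**
If `g` is `μ`-sharp on `X` with nonempty solution set `Xstar`, `0 < μ ≤ L`, `τ = μ/L`,
`0 < α < τμ/ρ`, `E* = (αL/(μ + √(μ² - αρL)))²`, `x ∈ 𝒯₁`, `ζ ≠ 0` is a weak subgradient of
`g` at `x` with `‖ζ‖ ≤ L`, and `x⁺ = proj_X(x - α·ζ/‖ζ‖)`, then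
`E(x⁺) - E* ≤ q·(E(x) - E*)`, where `q = 1 + (α/L)·(ρ - 2μ/(√(E(x)) + √(E*)))` and `q < 1`. -/
theorem contraction_inequality
    {d : ℕ} (hd : 1 ≤ d)
    (g : EuclideanSpace ℝ (Fin d) → ℝ) (μ ρ L α : ℝ)
    (hμ : 0 < μ) (hρ : 0 < ρ) (hμL : μ ≤ L)
    (hα : 0 < α) (hα' : α < (μ / L) * (μ / ρ))
    (X Xstar : Set (EuclideanSpace ℝ (Fin d)))
    (hXne : X.Nonempty) (hXcl : IsClosed X) (hXcv : Convex ℝ X)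
    (hXstar : Xstar = {x | x ∈ X ∧ ∀ y ∈ X, g x ≤ g y})
    (hXstarNe : Xstar.Nonempty)
    -- `gstar` is the minimal value of `g` over `X`
    (gstar : ℝ) (hgstar : ∀ z ∈ Xstar, g z = gstar)
    -- sharpness
    (hsharp : ∀ x ∈ X, μ * Metric.infDist x Xstar ≤ g x - gstar)
    -- `x` lies in the tube `𝒯₁`
    (x : EuclideanSpace ℝ (Fin d)) (hxX : x ∈ X)
    (hxtube : Metric.infDist x Xstar < μ / ρ)
    -- `ζ ≠ 0` is a weak subgradient of `g` at `x` with `‖ζ‖ ≤ L`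
    (ζ : EuclideanSpace ℝ (Fin d)) (hζ0 : ζ ≠ 0) (hζL : ‖ζ‖ ≤ L)
    (hζ : ∀ y, g x + ⟪ζ, y - x⟫_ℝ - ρ / 2 * ‖y - x‖ ^ 2 ≤ g y)
    -- `xp` is the projection onto `X` of the normalized subgradient step
    (xp : EuclideanSpace ℝ (Fin d)) (hxpX : xp ∈ X)
    (hxp : ∀ y ∈ X, dist (x - (α / ‖ζ‖) • ζ) xp ≤ dist (x - (α / ‖ζ‖) • ζ) y)
    -- the threshold `E*` and the contraction factor `q`
    (Estar : ℝ) (hEstar : Estar = (α * L / (μ + Real.sqrt (μ ^ 2 - α * ρ * L))) ^ 2)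
    (q : ℝ)
    (hq : q = 1 + (α / L) * (ρ - 2 * μ /
      (Real.sqrt (Metric.infDist x Xstar ^ 2) + Real.sqrt Estar))) :
    q < 1 ∧ Metric.infDist xp Xstar ^ 2 - Estar ≤ q * (Metric.infDist x Xstar ^ 2 - Estar) :=
  contraction_inequality_general g μ ρ L α hμ hρ hα hα' X Xstar hXcv hXstar hXstarNe gstar hgstar
    hsharp x hxX hxtube ζ hζ0 hζL hζ xp hxpX hxp Estar hEstar q hq
end
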